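/- The function t \mapsto 1/\sin(t/4) - 4/t is positive and monotone increasing on (0, \pi], and for all t in (0,\pi], 0 < \varphi(t)/\sin(t/4) - 4/t \le \sqrt{2}\, F(1/2) - 4/\pi, where \varphi(t) = F(\sin^2(t/4)) and F(x) = {}_2F_1(1/2,1/2;1;x). -/

import Mathlib

/-!
Write `s = sin (t / 4)`. The function `1 / sin (t / 4) - 4 / t` is positive because `sin x < x`,
and increasing on `(0, 4]` because its derivative has the sign of `sin² x - x² cos x` at
`x = t / 4 ≤ 1`, which the Taylor bounds for `sin` and `cos` make nonnegative. Since
`F(s²) - 1 = s² G(s²)` for a power series `G` with nonnegative coefficients, `(F(s²) - 1) / s`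
is nonnegative and increasing in `s`. Hence `F(s²) / s - 4 / t = (F(s²) - 1) / s + (1 / s - 4 / t)`
is positive and, as a sum of two functions increasing in `t`, bounded by its value at `t = π`,
where `s = √2 / 2`.
-/

/-- The Gauss hypergeometric function ₂F₁(1/2, 1/2; 1; x) as a power series. -/
noncomputable def gaussF (x : ℝ) : ℝ :=
  ∑' m : ℕ, (((ascPochhammer ℝ m).eval (1 / 2 : ℝ)) / (Nat.factorial m : ℝ)) ^ 2 * x ^ m

open Real Set

noncomputable def gaussCoeff (m : ℕ) : ℝ :=
  ((ascPochhammer ℝ m).eval (1 / 2 : ℝ) / (Nat.factorial m : ℝ)) ^ 2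

lemma gaussF_eq_tsum (x : ℝ) : gaussF x = ∑' m, gaussCoeff m * x ^ m := rfl

lemma gaussCoeff_zero : gaussCoeff 0 = 1 := by simp [gaussCoeff]

lemma gaussCoeff_nonneg (m : ℕ) : 0 ≤ gaussCoeff m := sq_nonneg _

lemma ascPochhammer_eval_le_eval {a b : ℝ} (ha : 0 < a) (hab : a ≤ b) (n : ℕ) :
    (ascPochhammer ℝ n).eval a ≤ (ascPochhammer ℝ n).eval b := by
  induction n with
  | zero => simp
  | succ n ih =>
    simp only [ascPochhammer_succ_eval]
    exact mul_le_mul ih (by linarith) (add_nonneg ha.le n.cast_nonneg)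
      (ascPochhammer_pos n b (ha.trans_le hab)).le

lemma abs_gaussCoeff_le_one (m : ℕ) : |gaussCoeff m| ≤ 1 := by
  have hfact : (0 : ℝ) < m.factorial := by positivity
  rw [abs_of_nonneg (gaussCoeff_nonneg m)]
  refine pow_le_one₀ (div_nonneg (ascPochhammer_pos m _ (by norm_num)).le hfact.le)
    ((div_le_one hfact).2 ?_)
  simpa using ascPochhammer_eval_le_eval (b := 1) (by norm_num : (0 : ℝ) < 1 / 2) (by norm_num) m

lemma summable_mul_pow_of_abs_le_one {a : ℕ → ℝ} (ha : ∀ m, |a m| ≤ 1) {x : ℝ} (hx : |x| < 1) :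
    Summable fun m => a m * x ^ m :=
  Summable.of_norm_bounded (summable_geometric_of_lt_one (abs_nonneg x) hx) fun m => by
    rw [norm_mul, norm_pow, Real.norm_eq_abs, Real.norm_eq_abs]
    exact mul_le_of_le_one_left (by positivity) (ha m)

lemma tsum_mul_pow_le_tsum_mul_pow {a : ℕ → ℝ} (ha : ∀ m, 0 ≤ a m) {x y : ℝ} (hx : 0 ≤ x)
    (hxy : x ≤ y) (hy : Summable fun m => a m * y ^ m) :
    ∑' m, a m * x ^ m ≤ ∑' m, a m * y ^ m := by
  have hle : ∀ m, a m * x ^ m ≤ a m * y ^ m := fun m =>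
    mul_le_mul_of_nonneg_left (pow_le_pow_left₀ hx hxy m) (ha m)
  exact (hy.of_nonneg_of_le (fun m => mul_nonneg (ha m) (pow_nonneg hx m)) hle).tsum_le_tsum hle hy

lemma gaussF_sub_one {x : ℝ} (hx : |x| < 1) :
    gaussF x - 1 = x * ∑' m, gaussCoeff (m + 1) * x ^ m := by
  rw [gaussF_eq_tsum, (summable_mul_pow_of_abs_le_one abs_gaussCoeff_le_one hx).tsum_eq_zero_add,
    ← tsum_mul_left]
  simp only [gaussCoeff_zero, pow_zero, mul_one, add_sub_cancel_left, pow_succ]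
  congr 1 with m
  ring

lemma one_le_gaussF {x : ℝ} (hx₀ : 0 ≤ x) (hx₁ : x < 1) : 1 ≤ gaussF x := by
  have hG : 0 ≤ ∑' m, gaussCoeff (m + 1) * x ^ m :=
    tsum_nonneg fun m => mul_nonneg (gaussCoeff_nonneg _) (pow_nonneg hx₀ m)
  linarith [gaussF_sub_one (abs_lt.2 ⟨by linarith, hx₁⟩), mul_nonneg hx₀ hG]

lemma gaussF_sq_sub_one_div_le {s s₀ : ℝ} (hs : 0 < s) (hss₀ : s ≤ s₀) (hs₀ : s₀ < 1) :
    (gaussF (s ^ 2) - 1) / s ≤ (gaussF (s₀ ^ 2) - 1) / s₀ := by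
  have hs₀pos : 0 < s₀ := hs.trans_le hss₀
  have habs {r : ℝ} (hr : 0 < r) (hr₁ : r < 1) : |r ^ 2| < 1 := by
    rw [abs_of_nonneg (sq_nonneg r)]; nlinarith
  have hdiv {r : ℝ} (hr : 0 < r) (hr₁ : r < 1) : (gaussF (r ^ 2) - 1) / r =
      r * ∑' m, gaussCoeff (m + 1) * (r ^ 2) ^ m := by
    rw [gaussF_sub_one (habs hr hr₁)]; field_simp
  rw [hdiv hs (hss₀.trans_lt hs₀), hdiv hs₀pos hs₀]
  refine mul_le_mul hss₀ ?_ (tsum_nonneg fun m => ?_) hs₀pos.le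
  · exact tsum_mul_pow_le_tsum_mul_pow (fun m => gaussCoeff_nonneg _) (sq_nonneg s)
      (pow_le_pow_left₀ hs.le hss₀ 2)
      (summable_mul_pow_of_abs_le_one (fun m => abs_gaussCoeff_le_one _) (habs hs₀pos hs₀))
  · exact mul_nonneg (gaussCoeff_nonneg _) (by positivity)

lemma four_div_lt_one_div_sin_div_four {t : ℝ} (ht₀ : 0 < t) (ht : t < 4 * π) :
    4 / t < 1 / sin (t / 4) := by
  have hsin : 0 < sin (t / 4) := sin_pos_of_pos_of_lt_pi (by linarith) (by linarith)
  rw [div_lt_div_iff₀ ht₀ hsin]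
  linarith [sin_lt (by linarith : 0 < t / 4)]

lemma hasDerivAt_one_div_sin_div_four_sub {t : ℝ} (ht : t ≠ 0) (hs : sin (t / 4) ≠ 0) :
    HasDerivAt (fun t => 1 / sin (t / 4) - 4 / t)
      (4 / t ^ 2 - cos (t / 4) / (4 * sin (t / 4) ^ 2)) t := by
  have hsin : HasDerivAt (fun u => sin (u / 4)) (cos (t / 4) * (1 / 4)) t :=
    ((hasDerivAt_id' t).div_const 4).sin
  refine (((hasDerivAt_const t 1).div hsin hs).sub
    ((hasDerivAt_const t 4).div (hasDerivAt_id' t) ht)).congr_deriv ?_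
  field_simp
  ring

lemma sq_mul_cos_le_sin_sq {x : ℝ} (hx₀ : 0 < x) (hx₁ : x ≤ 1) : x ^ 2 * cos x ≤ sin x ^ 2 := by
  have hsin : x - x ^ 3 / 6 < sin x := sin_gt_sub_cube hx₀
  have hcos : cos x ≤ 1 - x ^ 2 / 2 + x ^ 4 * (5 / 96) := by
    have := cos_bound (x := x) (by rw [abs_of_pos hx₀]; exact hx₁)
    rw [abs_of_pos hx₀] at this
    linarith [(abs_le.1 this).2]
  have hx₂ : x ^ 2 ≤ 1 := by nlinarith
  have hcube : 0 ≤ x - x ^ 3 / 6 := by nlinarith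
  nlinarith [pow_le_pow_left₀ hcube hsin.le 2, mul_le_mul_of_nonneg_left hcos (sq_nonneg x),
    mul_nonneg (pow_pos hx₀ 4).le (sub_nonneg.2 hx₂)]

lemma cos_div_le_four_div_sq {t : ℝ} (ht₀ : 0 < t) (ht : t ≤ 4) :
    cos (t / 4) / (4 * sin (t / 4) ^ 2) ≤ 4 / t ^ 2 := by
  obtain ⟨x, rfl⟩ : ∃ x, t = 4 * x := ⟨t / 4, by ring⟩
  have hx₀ : 0 < x := by linarith
  have hsin : 0 < sin x := sin_pos_of_pos_of_lt_pi hx₀ (by linarith [pi_gt_three])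
  rw [mul_div_cancel_left₀ x four_ne_zero, div_le_div_iff₀ (by positivity) (by positivity)]
  nlinarith [sq_mul_cos_le_sin_sq hx₀ (by linarith)]

lemma monotoneOn_one_div_sin_div_four_sub :
    MonotoneOn (fun t : ℝ => 1 / sin (t / 4) - 4 / t) (Ioc 0 4) := by
  have hderiv {t : ℝ} (ht : t ∈ Ioc (0 : ℝ) 4) := hasDerivAt_one_div_sin_div_four_sub ht.1.ne'
    (sin_pos_of_pos_of_lt_pi (by linarith [ht.1]) (by linarith [ht.2, pi_gt_three])).ne'
  refine monotoneOn_of_hasDerivWithinAt_nonneg (convex_Ioc 0 4)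
    (fun t ht => (hderiv ht).continuousAt.continuousWithinAt)
    (fun t ht => (hderiv (interior_subset ht)).hasDerivWithinAt) fun t ht => ?_
  rw [interior_Ioc] at ht
  exact sub_nonneg.2 (cos_div_le_four_div_sq ht.1 ht.2.le)

lemma gaussF_sin_pi_div_four_sq_div :
    gaussF (sin (π / 4) ^ 2) / sin (π / 4) = √2 * gaussF (1 / 2) := by
  have h2 : √2 ^ 2 = 2 := sq_sqrt zero_le_two
  rw [sin_pi_div_four, div_pow, h2]
  field_simp
  linear_combination (-gaussF (1 / 2)) * h2

theorem csc_bound_and_varphi_bound :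
    (∀ t ∈ Set.Ioc (0 : ℝ) Real.pi, 0 < 1 / Real.sin (t / 4) - 4 / t) ∧
      MonotoneOn (fun t : ℝ => 1 / Real.sin (t / 4) - 4 / t) (Set.Ioc (0 : ℝ) Real.pi) ∧
      ∀ t ∈ Set.Ioc (0 : ℝ) Real.pi,
        0 < gaussF (Real.sin (t / 4) ^ 2) / Real.sin (t / 4) - 4 / t ∧
        gaussF (Real.sin (t / 4) ^ 2) / Real.sin (t / 4) - 4 / t ≤
          Real.sqrt 2 * gaussF (1 / 2) - 4 / Real.pi := by
  have hpos : ∀ t ∈ Ioc 0 π, 0 < 1 / sin (t / 4) - 4 / t := fun t ht =>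
    sub_pos.2 (four_div_lt_one_div_sin_div_four ht.1 (by linarith [ht.2, pi_pos]))
  have hmono := monotoneOn_one_div_sin_div_four_sub.mono (Ioc_subset_Ioc_right pi_le_four)
  refine ⟨hpos, hmono, fun t ht => ?_⟩
  have hs : 0 < sin (t / 4) :=
    sin_pos_of_pos_of_lt_pi (by linarith [ht.1]) (by linarith [ht.2, pi_pos])
  have hss₀ : sin (t / 4) ≤ sin (π / 4) :=
    sin_le_sin_of_le_of_le_pi_div_two (by linarith [ht.1, pi_pos]) (by linarith [pi_pos])
      (by linarith [ht.2])
  have hs₀ : sin (π / 4) < 1 := by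
    rw [sin_pi_div_four]; nlinarith [sq_sqrt (zero_le_two : (0 : ℝ) ≤ 2), sqrt_nonneg 2]
  refine ⟨?_, ?_⟩
  · calc 0 < 1 / sin (t / 4) - 4 / t := hpos t ht
      _ ≤ gaussF (sin (t / 4) ^ 2) / sin (t / 4) - 4 / t := by
        gcongr
        exact one_le_gaussF (sq_nonneg _) (by nlinarith)
  · calc gaussF (sin (t / 4) ^ 2) / sin (t / 4) - 4 / t
          = (gaussF (sin (t / 4) ^ 2) - 1) / sin (t / 4) + (1 / sin (t / 4) - 4 / t) := by ring
      _ ≤ (gaussF (sin (π / 4) ^ 2) - 1) / sin (π / 4) + (1 / sin (π / 4) - 4 / π) :=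
        add_le_add (gaussF_sq_sub_one_div_le hs hss₀ hs₀) (hmono ht ⟨pi_pos, le_rfl⟩ ht.2)
      _ = √2 * gaussF (1 / 2) - 4 / π := by rw [← gaussF_sin_pi_div_four_sq_div]; ring
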